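/- arXiv:1905.01579 — 2 statements merged into one kernel-verified Lean document; each statement's English description precedes it below -/
import Mathlib

section
/- For every natural number n, the space [P_n(ℝ³)]³ of vector-valued polynomials in three variables with real coefficients of total degree at most n decomposes as a direct sum [P_n]³ = ∇(P_{n+1}) ⊕ (x ∧ [P_{n-1}]³), where ∇(P_{n+1}) is the space of gradients of scalar polynomials of degree at most n+1 and x ∧ [P_{n-1}]³ is the space of cross products of the position vector x with vector polynomials of degree at most n-1. -/
open MvPolynomial

noncomputable section

/-- Scalar polynomials in three real variables. -/
abbrev Poly3 := MvPolynomial (Fin 3) ℝ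

/-- `p` belongs to `P_m(ℝ³)`, the polynomials of total degree at most `m`
(with the convention `P_m = {0}` for `m < 0`). -/
def degLE (m : ℤ) (p : Poly3) : Prop := p = 0 ∨ (p.totalDegree : ℤ) ≤ m

/-- Gradient of a scalar polynomial. -/
def pgrad (q : Poly3) : Fin 3 → Poly3 := fun i => pderiv i q

/-- Cross product `x ∧ p` of the position vector with a vector polynomial. -/
def xcross (p : Fin 3 → Poly3) : Fin 3 → Poly3 :=
  ![X 1 * p 2 - X 2 * p 1,
    X 2 * p 0 - X 0 * p 2,
    X 0 * p 1 - X 1 * p 0]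

def Dop : Poly3 →ₗ[ℝ] Poly3 where
  toFun p := ∑ i : Fin 3, X i * pderiv i p
  map_add' p q := by simp [mul_add, Finset.sum_add_distrib]
  map_smul' c p := by simp [Finset.smul_sum, mul_smul_comm]

lemma degsum (e : Fin 3 →₀ ℕ) : (e.sum fun _ k => k) = ∑ i : Fin 3, e i := by
  rw [Finsupp.sum_fintype]; intro; rfl

lemma Dop_monomial (s : Fin 3 →₀ ℕ) (a : ℝ) :
    Dop (monomial s a) = ((∑ i : Fin 3, (s i : ℝ))) • monomial s a := by
  show (∑ i : Fin 3, X i * pderiv i (monomial s a)) = _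
  rw [Finset.sum_smul]
  refine Finset.sum_congr rfl fun i _ => ?_
  rw [pderiv_monomial]
  by_cases h : s i = 0
  · simp [h]
  · have hs : Finsupp.single i 1 + (s - Finsupp.single i 1) = s := by
      ext j
      by_cases hj : j = i
      · subst hj; simp [Finsupp.single_apply]; omega
      · simp [Finsupp.single_apply, Ne.symm hj]
    rw [X, monomial_mul, hs, smul_monomial, smul_eq_mul]
    ring_nf

lemma Dop_eq_sum (p : Poly3) :
    Dop p = ∑ d ∈ p.support, (∑ i : Fin 3, (d i : ℝ)) • monomial d (coeff d p) := by
  conv_lhs => rw [← p.support_sum_monomial_coeff, map_sum]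
  exact Finset.sum_congr rfl fun d _ => Dop_monomial d _

lemma coeff_Dop (d : Fin 3 →₀ ℕ) (p : Poly3) :
    coeff d (Dop p) = (∑ i : Fin 3, (d i : ℝ)) * coeff d p := by
  rw [Dop_eq_sum]
  rw [MvPolynomial.coeff_sum]
  rw [Finset.sum_eq_single d]
  · rw [MvPolynomial.coeff_smul, coeff_monomial, if_pos rfl, smul_eq_mul]
  · intro b _ hbd
    rw [MvPolynomial.coeff_smul, coeff_monomial, if_neg hbd, smul_zero]
  · intro hd
    rw [MvPolynomial.notMem_support_iff.mp hd]
    simp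

lemma pderiv_eq_zero_of_Dop_eq_zero {p : Poly3} (h : Dop p = 0) (j : Fin 3) :
    pderiv j p = 0 := by
  have hp : p = C (coeff 0 p) := by
    ext d
    by_cases hd : d = 0
    · subst hd; simp
    · rw [coeff_C, if_neg (Ne.symm hd)]
      have := coeff_Dop d p
      rw [h, coeff_zero] at this
      have hsum : (∑ i : Fin 3, (d i : ℝ)) ≠ 0 := by
        obtain ⟨i, hi⟩ : ∃ i, d i ≠ 0 := by
          by_contra hc
          push_neg at hc
          exact hd (Finsupp.ext fun i => hc i)
        have h1 : (1:ℝ) ≤ ∑ i : Fin 3, (d i : ℝ) := by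
          calc (1:ℝ) ≤ (d i : ℝ) := by exact_mod_cast Nat.one_le_iff_ne_zero.mpr hi
          _ ≤ _ := Finset.single_le_sum (f := fun i => (d i : ℝ))
                (fun _ _ => by positivity) (Finset.mem_univ i)
        linarith
      exact (mul_eq_zero.mp this.symm).resolve_left hsum
  rw [hp, pderiv_C]

def Einv (p : Poly3) : Poly3 :=
  ∑ d ∈ p.support, ((∑ i : Fin 3, (d i : ℝ)) + 1)⁻¹ • monomial d (coeff d p)

lemma sum_cast_nonneg (d : Fin 3 →₀ ℕ) : (0:ℝ) ≤ ∑ i : Fin 3, (d i : ℝ) := by positivity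

lemma Einv_prop (p : Poly3) : Dop (Einv p) + Einv p = p := by
  rw [Einv, map_sum, ← Finset.sum_add_distrib]
  conv_rhs => rw [← p.support_sum_monomial_coeff]
  refine Finset.sum_congr rfl fun d _ => ?_
  rw [map_smul, Dop_monomial, smul_smul, ← add_smul]
  have hne : (∑ i : Fin 3, (d i : ℝ)) + 1 ≠ 0 := by
    have := sum_cast_nonneg d; linarith
  rw [show ((∑ i : Fin 3, (d i : ℝ)) + 1)⁻¹ * (∑ i : Fin 3, (d i : ℝ)) +
      ((∑ i : Fin 3, (d i : ℝ)) + 1)⁻¹ = 1 by field_simp, one_smul]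

lemma Einv_degree (p : Poly3) : (Einv p).totalDegree ≤ p.totalDegree := by
  refine (totalDegree_finset_sum _ _).trans (Finset.sup_le fun d hd => ?_)
  refine (totalDegree_smul_le _ _).trans ?_
  by_cases hc : coeff d p = 0
  · simp [hc]
  · rw [totalDegree_monomial _ hc]
    exact le_totalDegree hd

lemma degLE_natCast_iff {n : ℕ} {p : Poly3} : degLE (n : ℤ) p ↔ p.totalDegree ≤ n := by
  constructor
  · rintro (rfl | h)
    · simp
    · exact_mod_cast h
  · intro h; right; exact_mod_cast h

lemma sum_sub_single {d : Fin 3 →₀ ℕ} {j : Fin 3} (h : d j ≠ 0) :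
    ∑ i : Fin 3, (d - (Finsupp.single j 1 : Fin 3 →₀ ℕ)) i = (∑ i : Fin 3, d i) - 1 := by
  have hs : ∀ i : Fin 3, (d - (Finsupp.single j 1 : Fin 3 →₀ ℕ)) i = d i - (if j = i then 1 else 0) := by
    intro i
    rw [Finsupp.tsub_apply, Finsupp.single_apply]
  simp only [hs, Fin.sum_univ_three]
  fin_cases j <;> simp at h ⊢ <;> omega

lemma degLE_sub {m : ℤ} {a b : Poly3} (ha : degLE m a) (hb : degLE m b) :
    degLE m (a - b) := by
  rcases ha with rfl | ha
  · rcases hb with rfl | hb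
    · left; simp
    · right
      rw [zero_sub]
      have : (-b).totalDegree = b.totalDegree := totalDegree_neg b
      rw [this]; exact hb
  · rcases hb with rfl | hb
    · right; rwa [sub_zero]
    · right
      have h1 : (a - b).totalDegree ≤ max a.totalDegree b.totalDegree := totalDegree_sub a b
      have h2 : ((a-b).totalDegree : ℤ) ≤ ((max a.totalDegree b.totalDegree : ℕ) : ℤ) := by
        exact_mod_cast h1
      refine h2.trans ?_
      rw [Nat.cast_max]
      exact max_le ha hb
lemma degLE_pderiv {n : ℕ} {p : Poly3} (h : p.totalDegree ≤ n) (j : Fin 3) :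
    degLE ((n : ℤ) - 1) (pderiv j p) := by
  by_cases hz : pderiv j p = 0
  · left; exact hz
  right
  have hrep : pderiv j p =
      ∑ d ∈ p.support, monomial (d - Finsupp.single j 1) (coeff d p * d j) := by
    conv_lhs => rw [← p.support_sum_monomial_coeff, map_sum]
    exact Finset.sum_congr rfl fun d _ => pderiv_monomial
  have hn : 1 ≤ n := by
    by_contra hn
    push_neg at hn
    interval_cases n
    apply hz
    rw [hrep]
    refine Finset.sum_eq_zero fun d hd => ?_
    have hd0 : d = 0 := by
      have := le_totalDegree hd
      have h0 : (d.sum fun _ k => k) = 0 := le_antisymm (this.trans h) (Nat.zero_le _)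
      rw [degsum] at h0
      ext i
      have := Finset.sum_eq_zero_iff.mp h0 i (Finset.mem_univ i)
      simpa using this
    subst hd0
    simp
  have hdeg : (pderiv j p).totalDegree ≤ n - 1 := by
    rw [hrep]
    refine (totalDegree_finset_sum _ _).trans (Finset.sup_le fun d hd => ?_)
    by_cases hdj : d j = 0
    · simp [hdj]
    · by_cases hc : coeff d p * (d j : ℝ) = 0
      · simp [hc]
      rw [totalDegree_monomial _ hc, degsum]
      have hds : (∑ i : Fin 3, d i) ≤ n := by
        have := le_totalDegree hd
        rw [degsum] at this
        exact this.trans h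
      have hss := sum_sub_single hdj
      omega
  calc ((pderiv j p).totalDegree : ℤ) ≤ ((n - 1 : ℕ) : ℤ) := by exact_mod_cast hdeg
    _ ≤ (n : ℤ) - 1 := by omega

lemma Dop_apply (p : Poly3) : Dop p = ∑ i : Fin 3, X i * pderiv i p := rfl

lemma key_zero {Q : Poly3} {R : Fin 3 → Poly3} (h : pgrad Q = xcross R) (j : Fin 3) :
    pderiv j Q = 0 := by
  apply pderiv_eq_zero_of_Dop_eq_zero (h := ?_) j
  have h0 := congrFun h 0
  have h1 := congrFun h 1
  have h2 := congrFun h 2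
  simp only [pgrad, xcross, Matrix.cons_val_zero, Matrix.cons_val_one, Matrix.head_cons,
    Matrix.cons_val_two, Matrix.tail_cons] at h0 h1 h2
  rw [Dop_apply, Fin.sum_univ_three, h0, h1, h2]
  ring


/-- `[P_n(ℝ³)]³ = ∇(P_{n+1}) ⊕ (x ∧ [P_{n-1}]³)`: every vector polynomial of degree
at most `n` decomposes uniquely as a sum of a gradient of a polynomial of degree at
most `n+1` and a cross product of `x` with a vector polynomial of degree at most `n-1`. -/
theorem poly_decomposition_grad_cross (n : ℕ) (v : Fin 3 → Poly3)
    (hv : ∀ i, degLE (n : ℤ) (v i)) :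
    ∃! gc : (Fin 3 → Poly3) × (Fin 3 → Poly3),
      (∃ q : Poly3, degLE ((n : ℤ) + 1) q ∧ gc.1 = pgrad q) ∧
      (∃ r : Fin 3 → Poly3, (∀ i, degLE ((n : ℤ) - 1) (r i)) ∧ gc.2 = xcross r) ∧
      v = gc.1 + gc.2 := by
  classical
  set u : Fin 3 → Poly3 := fun i => Einv (v i) with hu
  set q : Poly3 := X 0 * u 0 + X 1 * u 1 + X 2 * u 2 with hqdef
  set r : Fin 3 → Poly3 :=
    ![pderiv 2 (u 1) - pderiv 1 (u 2),
      pderiv 0 (u 2) - pderiv 2 (u 0),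
      pderiv 1 (u 0) - pderiv 0 (u 1)] with hrdef
  have hvu : ∀ i, v i = Dop (u i) + u i := fun i => (Einv_prop (v i)).symm
  have hun : ∀ i, (u i).totalDegree ≤ n := fun i =>
    (Einv_degree (v i)).trans (degLE_natCast_iff.mp (hv i))
  have e10 : ((1:Fin 3) ≠ 0) := by decide
  have e20 : ((2:Fin 3) ≠ 0) := by decide
  have e01 : ((0:Fin 3) ≠ 1) := by decide
  have e21 : ((2:Fin 3) ≠ 1) := by decide
  have e02 : ((0:Fin 3) ≠ 2) := by decide
  have e12 : ((1:Fin 3) ≠ 2) := by decide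
  have h0 : Dop (u 0) + u 0 = (pgrad q + xcross r) 0 := by
    simp only [Pi.add_apply, pgrad, xcross, hqdef, hrdef, Dop_apply, Fin.sum_univ_three,
      Matrix.cons_val_zero, Matrix.cons_val_one, Matrix.head_cons,
      Matrix.cons_val_two, Matrix.tail_cons, map_add, pderiv_mul, map_sub,
      pderiv_X_self, pderiv_X_of_ne e10, pderiv_X_of_ne e20, pderiv_X_of_ne e01,
      pderiv_X_of_ne e21, pderiv_X_of_ne e02, pderiv_X_of_ne e12]
    ring
  have h1 : Dop (u 1) + u 1 = (pgrad q + xcross r) 1 := by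
    simp only [Pi.add_apply, pgrad, xcross, hqdef, hrdef, Dop_apply, Fin.sum_univ_three,
      Matrix.cons_val_zero, Matrix.cons_val_one, Matrix.head_cons,
      Matrix.cons_val_two, Matrix.tail_cons, map_add, pderiv_mul, map_sub,
      pderiv_X_self, pderiv_X_of_ne e10, pderiv_X_of_ne e20, pderiv_X_of_ne e01,
      pderiv_X_of_ne e21, pderiv_X_of_ne e02, pderiv_X_of_ne e12]
    ring
  have h2 : Dop (u 2) + u 2 = (pgrad q + xcross r) 2 := by
    simp only [Pi.add_apply, pgrad, xcross, hqdef, hrdef, Dop_apply, Fin.sum_univ_three,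
      Matrix.cons_val_zero, Matrix.cons_val_one, Matrix.head_cons,
      Matrix.cons_val_two, Matrix.tail_cons, map_add, pderiv_mul, map_sub,
      pderiv_X_self, pderiv_X_of_ne e10, pderiv_X_of_ne e20, pderiv_X_of_ne e01,
      pderiv_X_of_ne e21, pderiv_X_of_ne e02, pderiv_X_of_ne e12]
    ring
  have hsum : v = pgrad q + xcross r := by
    funext i
    fin_cases i
    · exact (hvu 0).trans h0
    · exact (hvu 1).trans h1
    · exact (hvu 2).trans h2
  have hq : degLE ((n : ℤ) + 1) q := by
    have hcast : ((n : ℤ) + 1) = ((n + 1 : ℕ) : ℤ) := by push_cast; ring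
    rw [hcast, degLE_natCast_iff]
    have hterm : ∀ i : Fin 3, (X i * u i).totalDegree ≤ n + 1 := fun i =>
      (totalDegree_mul _ _).trans (by rw [totalDegree_X]; have := hun i; omega)
    rw [hqdef]
    refine (totalDegree_add _ _).trans (max_le ((totalDegree_add _ _).trans
      (max_le (hterm 0) (hterm 1))) (hterm 2))
  have hr : ∀ i, degLE ((n : ℤ) - 1) (r i) := by
    intro i
    fin_cases i
    · exact degLE_sub (degLE_pderiv (hun 1) 2) (degLE_pderiv (hun 2) 1)
    · exact degLE_sub (degLE_pderiv (hun 2) 0) (degLE_pderiv (hun 0) 2)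
    · exact degLE_sub (degLE_pderiv (hun 0) 1) (degLE_pderiv (hun 1) 0)
  refine ⟨(pgrad q, xcross r), ⟨⟨q, hq, rfl⟩, ⟨r, hr, rfl⟩, hsum⟩, ?_⟩
  rintro ⟨g, c⟩ ⟨⟨q₁, hq₁, rfl⟩, ⟨r₁, hr₁, rfl⟩, hsum₁⟩
  have hgr : pgrad q₁ + xcross r₁ = pgrad q + xcross r := hsum₁.symm.trans hsum
  have hQR : pgrad (q₁ - q) = xcross (fun i => r i - r₁ i) := by
    funext i
    have hgri := congrFun hgr i
    simp only [Pi.add_apply] at hgri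
    have hx0 : xcross (fun k => r k - r₁ k) 0 = xcross r 0 - xcross r₁ 0 := by
      simp only [xcross, Matrix.cons_val_zero, Matrix.cons_val_one, Matrix.head_cons,
        Matrix.cons_val_two, Matrix.tail_cons]
      ring
    have hx1 : xcross (fun k => r k - r₁ k) 1 = xcross r 1 - xcross r₁ 1 := by
      simp only [xcross, Matrix.cons_val_zero, Matrix.cons_val_one, Matrix.head_cons,
        Matrix.cons_val_two, Matrix.tail_cons]
      ring
    have hx2 : xcross (fun k => r k - r₁ k) 2 = xcross r 2 - xcross r₁ 2 := by
      simp only [xcross, Matrix.cons_val_zero, Matrix.cons_val_one, Matrix.head_cons,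
        Matrix.cons_val_two, Matrix.tail_cons]
      ring
    have hx : xcross (fun k => r k - r₁ k) i = xcross r i - xcross r₁ i := by
      fin_cases i
      · exact hx0
      · exact hx1
      · exact hx2
    rw [hx]
    simp only [pgrad, map_sub]
    have : pderiv i q₁ - pderiv i q = xcross r i - xcross r₁ i := by
      have h1 : pderiv i q₁ = pgrad q₁ i := rfl
      have h2 : pderiv i q = pgrad q i := rfl
      rw [h1, h2]; linear_combination hgri
    exact this
  have hQ0 : ∀ j, pderiv j (q₁ - q) = 0 := key_zero hQR
  have hg : pgrad q₁ = pgrad q := by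
    funext j
    have := hQ0 j
    rw [map_sub, sub_eq_zero] at this
    exact this
  have hc : xcross r₁ = xcross r := by
    have := hgr
    rw [hg] at this
    exact add_left_cancel this
  exact Prod.ext hg hc
end
end

section
/- The dimension of the space of divergence-free vector polynomials of degree at most k-3 in three variables equals 3·π_{k-2,3} - π_{k-1,3} + 1, where π_{m,3} = (m+1)(m+2)(m+3)/6 is the dimension of P_m(ℝ³). -/
open MvPolynomial

noncomputable section

/-- The space `P_m(ℝ³)` of scalar polynomials of total degree at most `m`,
with `P_m = {0}` for `m < 0`. -/
def PZ (m : ℤ) : Submodule ℝ Poly3 :=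
  if 0 ≤ m then restrictTotalDegree (Fin 3) ℝ m.toNat else ⊥

/-- The space `[P_m(ℝ³)]³` of vector polynomials with components of degree at most `m`. -/
def VZ (m : ℤ) : Submodule ℝ (Fin 3 → Poly3) :=
  Submodule.pi Set.univ fun _ => PZ m

/-- The divergence, as a linear map on vector polynomials. -/
def pdivL : (Fin 3 → Poly3) →ₗ[ℝ] Poly3 :=
  ∑ i : Fin 3, (pderiv i).toLinearMap ∘ₗ LinearMap.proj i

/-!
The divergence maps `[P_m]³` onto `P_{m-1}`: it lowers degrees, and any `q ∈ P_{m-1}` is the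
divergence of `(p, 0, 0)` with `p` a termwise antiderivative of `q` in `x₁`. By rank–nullity the
divergence-free fields in `[P_m]³` therefore form a space of dimension `3 π_m - π_{m-1}`, and with
`π_m = binom(m+3, 3)` (monomials of degree `≤ m` in three variables are the monomials of degree
exactly `m` in four) this is the stated binomial expression for `m = k - 3`.
-/

section Counting

variable (σ : Type*) [Fintype σ]

def sumLeEquivSumEqOption (n : ℕ) :
    {d : σ → ℕ // ∑ i, d i ≤ n} ≃ {e : Option σ → ℕ // ∑ o, e o = n} where
  toFun d := ⟨fun o => o.elim (n - ∑ i, d.1 i) d.1, by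
    rw [Fintype.sum_option]
    exact Nat.sub_add_cancel d.2⟩
  invFun e := ⟨fun i => e.1 (some i), by
    have := e.2
    rw [Fintype.sum_option] at this
    exact le_of_add_le_right this.le⟩
  left_inv d := rfl
  right_inv e := by
    have := e.2
    rw [Fintype.sum_option] at this
    ext (_ | i)
    · show n - ∑ i, e.1 (some i) = e.1 none
      omega
    · rfl

theorem card_subtype_sum_le (n : ℕ) :
    Nat.card {d : σ → ℕ // ∑ i, d i ≤ n} = (n + Fintype.card σ).choose (Fintype.card σ) := by
  classical
  rw [Nat.card_congr ((sumLeEquivSumEqOption σ n).trans (Sym.equivNatSumOfFintype _ n).symm),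
    Nat.card_eq_fintype_card, Sym.card_sym_eq_choose, Fintype.card_option, Nat.add_right_comm,
    Nat.add_sub_cancel,
    ← Nat.choose_symm_add, add_comm]

end Counting

theorem MvPolynomial.finrank_restrictTotalDegree (σ R : Type*) [Fintype σ] [CommRing R]
    [Nontrivial R] (n : ℕ) :
    Module.finrank R (restrictTotalDegree σ R n) =
      (n + Fintype.card σ).choose (Fintype.card σ) := by
  classical
  rw [restrictTotalDegree, Module.finrank_eq_nat_card_basis (basisRestrictSupport R _),
    ← card_subtype_sum_le]
  exact Nat.card_congr <| Finsupp.equivFunOnFinite.subtypeEquiv fun d => by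
    simp [Finsupp.sum_fintype]

namespace MvPolynomial

variable {σ R : Type*}

theorem totalDegree_pderiv_lt [CommSemiring R] {p : MvPolynomial σ R} (i : σ)
    (h : pderiv i p ≠ 0) : (pderiv i p).totalDegree < p.totalDegree := by
  classical
  obtain ⟨d, hd, hdeg⟩ := Finset.exists_mem_eq_sup _ (support_nonempty.mpr h)
    fun d => d.sum fun _ e => e
  have hcoeff : coeff (d + Finsupp.single i 1) p ≠ 0 := by
    intro h0
    rw [mem_support_iff, coeff_pderiv, h0, zero_mul] at hd
    exact hd rfl
  calc (pderiv i p).totalDegree = d.sum fun _ e => e := hdeg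
    _ < (d + Finsupp.single i 1).sum fun _ e => e := by
      rw [Finsupp.sum_add_index' (fun _ => rfl) (fun _ _ _ => rfl), Finsupp.sum_single_index rfl]
      exact Nat.lt_succ_self _
    _ ≤ p.totalDegree := le_totalDegree (mem_support_iff.mpr hcoeff)

theorem pderiv_monomial_add_single [Field R] [CharZero R] (i : σ) (d : σ →₀ ℕ) (c : R) :
    pderiv i (monomial (d + Finsupp.single i 1) (c / (d i + 1))) = monomial d c := by
  classical
  rw [pderiv_monomial, add_tsub_cancel_right]
  congr 1
  simp only [Finsupp.add_apply, Finsupp.single_eq_same, Nat.cast_add, Nat.cast_one]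
  field_simp

theorem exists_pderiv_eq [Field R] [CharZero R] (i : σ) (q : MvPolynomial σ R) :
    ∃ p, pderiv i p = q ∧ p.totalDegree ≤ q.totalDegree + 1 := by
  classical
  refine ⟨∑ d ∈ q.support, monomial (d + Finsupp.single i 1) (coeff d q / (d i + 1)), ?_, ?_⟩
  · rw [map_sum]
    conv_rhs => rw [q.as_sum]
    exact Finset.sum_congr rfl fun d _ => pderiv_monomial_add_single i d _
  · refine (totalDegree_finsetSum _ _).trans (Finset.sup_le fun d hd => ?_)
    refine (totalDegree_monomial_le _ _).trans ?_
    rw [Finsupp.sum_add_index' (fun _ => rfl) (fun _ _ _ => rfl), Finsupp.sum_single_index rfl]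
    exact Nat.add_le_add_right (le_totalDegree hd) 1

end MvPolynomial

open Module

theorem Submodule.finrank_map_add_finrank_inf_ker {K V W : Type*} [DivisionRing K]
    [AddCommGroup V] [Module K V] [AddCommGroup W] [Module K W] (f : V →ₗ[K] W)
    (p : Submodule K V) [FiniteDimensional K p] :
    finrank K (p.map f) + finrank K ↥(p ⊓ LinearMap.ker f) = finrank K p := by
  rw [← LinearMap.finrank_range_add_finrank_ker (f.domRestrict p), LinearMap.range_domRestrict,
    LinearMap.ker_domRestrict, ← Submodule.finrank_map_subtype_eq, Submodule.map_comap_subtype]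

instance Submodule.finiteDimensional_pi_univ_const {K V ι : Type*} [DivisionRing K]
    [AddCommGroup V] [Module K V] [Finite ι] (p : Submodule K V) [FiniteDimensional K p] :
    FiniteDimensional K (Submodule.pi Set.univ fun _ : ι => p) := by
  rw [← p.range_subtype, ← LinearMap.range_compLeft]
  infer_instance

theorem Submodule.finrank_pi_univ_const {K V ι : Type*} [DivisionRing K] [AddCommGroup V]
    [Module K V] [Fintype ι] (p : Submodule K V) [FiniteDimensional K p] :
    finrank K (Submodule.pi Set.univ fun _ : ι => p) = Fintype.card ι * finrank K p := by
  have hinj : Function.Injective (p.subtype.compLeft ι) :=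
    fun _ _ h => funext fun i => p.subtype_injective (congr_fun h i)
  rw [← p.range_subtype, ← LinearMap.range_compLeft, LinearMap.finrank_range_of_inj hinj,
    finrank_pi_fintype, Finset.sum_const, Finset.card_univ, smul_eq_mul, p.range_subtype]

theorem PZ_of_neg {m : ℤ} (hm : m < 0) : PZ m = ⊥ := by
  simp [PZ, not_le.mpr hm]

theorem mem_PZ_of_nonneg {m : ℤ} (hm : 0 ≤ m) {p : Poly3} :
    p ∈ PZ m ↔ (p.totalDegree : ℤ) ≤ m := by
  rw [PZ, if_pos hm, mem_restrictTotalDegree]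
  omega

instance (m : ℤ) : FiniteDimensional ℝ (PZ m) := by
  by_cases hm : 0 ≤ m
  · rw [PZ, if_pos hm]; infer_instance
  · rw [PZ, if_neg hm]; infer_instance

theorem finrank_PZ (m : ℤ) : finrank ℝ (PZ m) = ((m + 3).toNat).choose 3 := by
  rcases lt_or_ge m 0 with hm | hm
  · rw [PZ_of_neg hm, finrank_bot, Nat.choose_eq_zero_of_lt (by omega)]
  · rw [PZ, if_pos hm, finrank_restrictTotalDegree, Fintype.card_fin]
    congr 1
    omega

instance (m : ℤ) : FiniteDimensional ℝ (VZ m) := by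
  unfold VZ; infer_instance

theorem finrank_VZ (m : ℤ) : finrank ℝ (VZ m) = 3 * finrank ℝ (PZ m) := by
  rw [VZ, Submodule.finrank_pi_univ_const, Fintype.card_fin]

theorem pderiv_mem_PZ_sub_one {m : ℤ} {p : Poly3} (i : Fin 3) (hp : p ∈ PZ m) :
    pderiv i p ∈ PZ (m - 1) := by
  by_cases h : pderiv i p = 0
  · rw [h]; exact zero_mem _
  have hlt := totalDegree_pderiv_lt i h
  have hm : 0 ≤ m := by
    by_contra! hm
    rw [PZ_of_neg hm, Submodule.mem_bot] at hp
    simp [hp] at h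
  rw [mem_PZ_of_nonneg hm] at hp
  rw [mem_PZ_of_nonneg (by omega)]
  omega

theorem pdivL_apply (v : Fin 3 → Poly3) : pdivL v = ∑ i, pderiv i (v i) := by
  simp [pdivL]

theorem map_pdivL_VZ (m : ℤ) : (VZ m).map pdivL = PZ (m - 1) := by
  refine le_antisymm (Submodule.map_le_iff_le_comap.mpr fun v hv => ?_) fun q hq => ?_
  · rw [Submodule.mem_comap, pdivL_apply]
    exact Submodule.sum_mem _ fun i _ => pderiv_mem_PZ_sub_one i (hv i trivial)
  · by_cases hq0 : q = 0
    · rw [hq0]; exact zero_mem _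
    have hm : 0 ≤ m - 1 := by
      by_contra! hm
      rw [PZ_of_neg hm, Submodule.mem_bot] at hq
      exact hq0 hq
    obtain ⟨p, hpq, hp⟩ := exists_pderiv_eq 0 q
    refine ⟨Pi.single 0 p, fun i _ => ?_, ?_⟩
    · rcases eq_or_ne i 0 with rfl | hi
      · show p ∈ PZ m
        rw [mem_PZ_of_nonneg (by omega)]
        rw [mem_PZ_of_nonneg hm] at hq
        omega
      · rw [Pi.single_eq_of_ne hi]; exact zero_mem _
    · rw [pdivL_apply, Fintype.sum_eq_single 0 fun i hi => by simp [Pi.single_eq_of_ne hi]]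
      simpa using hpq

theorem finrank_VZ_inf_ker_pdivL_add (m : ℤ) :
    finrank ℝ ↥(VZ m ⊓ LinearMap.ker pdivL) + finrank ℝ (PZ (m - 1)) = 3 * finrank ℝ (PZ m) := by
  rw [← map_pdivL_VZ, add_comm, Submodule.finrank_map_add_finrank_inf_ker, finrank_VZ]

theorem three_mul_choose_three_sub_choose_three (j : ℕ) :
    (3 * (j + 1).choose 3 - j.choose 3 : ℤ) = 3 * (j + 2).choose 3 - (j + 3).choose 3 + 1 := by
  simp only [Nat.choose_succ_succ', zero_add, Nat.choose_one_right, Nat.choose_zero_right]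
  push_cast
  ring

/-- For `k ≥ 2`, the dimension of the space of divergence-free vector polynomials of
degree at most `k-3` equals `3·π_{k-2,3} - π_{k-1,3} + 1`, where
`π_{m,3} = dim P_m(ℝ³) = binom(m+3,3)`. -/
theorem dim_divfree_polys (k : ℕ) (hk : 2 ≤ k) :
    (Module.finrank ℝ ↥(VZ ((k : ℤ) - 3) ⊓ LinearMap.ker pdivL) : ℤ)
      = 3 * Nat.choose (k - 2 + 3) 3 - Nat.choose (k - 1 + 3) 3 + 1 := by
  obtain ⟨j, rfl⟩ : ∃ j, k = j + 1 := ⟨k - 1, by omega⟩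
  have hdim := finrank_VZ_inf_ker_pdivL_add ((j + 1 : ℕ) - 3 : ℤ)
  rw [finrank_PZ, finrank_PZ, show ((j + 1 : ℕ) - 3 + 3 : ℤ).toNat = j + 1 by omega,
    show ((j + 1 : ℕ) - 3 - 1 + 3 : ℤ).toNat = j by omega] at hdim
  rw [show j + 1 - 2 + 3 = j + 2 by omega, show j + 1 - 1 + 3 = j + 3 by omega,
    ← three_mul_choose_three_sub_choose_three]
  omega
end
end
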